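/- arXiv:0910.2317 — 7 statements merged into one kernel-verified Lean document; each statement's English description precedes it below -/
import Mathlib

section
/- Let D be a metric on a finite set X, let S = A|B be a split of X (a bipartition into nonempty sets A and B) satisfying D(a,b) + D(a',b') = D(a,b') + D(a',b) for all a,a' ∈ A and b,b' ∈ B. Then for any a ∈ A and b ∈ B, D(a|B) + D(b|A) − D(a,b) = α_S, where α_S := (1/2) · min over a',a'' ∈ A, b',b'' ∈ B of (max(D(a',b')+D(a'',b''), D(a',b'')+D(a'',b')) − D(a',a'') − D(b',b'')). In particular, D(a|B) + D(b|A) − D(a,b) does not depend on the choice of a ∈ A and b ∈ B. -/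
open Classical

variable {X : Type*}

/-- `D` is a metric on `X`. -/
def IsMetric (D : X → X → ℝ) : Prop :=
  (∀ x, D x x = 0) ∧ (∀ x y, D x y = D y x) ∧
  (∀ x y z, D x z ≤ D x y + D y z) ∧ (∀ x y, x ≠ y → 0 < D x y)

/-- `f ∈ P(D)`. -/
def memP (D : X → X → ℝ) (f : X → ℝ) : Prop := ∀ x y, D x y ≤ f x + f y

/-- The virtual distance `D(f|Y) = (1/2) min {f y + f y' - D y y' : y, y' ∈ Y}`. -/
noncomputable def vdist (D : X → X → ℝ) (f : X → ℝ) (Y : Set X) : ℝ :=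
  (1 / 2) * sInf {z | ∃ y ∈ Y, ∃ y' ∈ Y, z = f y + f y' - D y y'}

/-- `D(x|Y) := D(k_x|Y)` for the Kuratowski map `k_x`. -/
noncomputable def kdist (D : X → X → ℝ) (x : X) (Y : Set X) : ℝ :=
  vdist D (fun y => D x y) Y

/-- The isolation index `α_S` of the split `S = A|B`. -/
noncomputable def isoIdx (D : X → X → ℝ) (A B : Set X) : ℝ :=
  (1 / 2) * sInf {z | ∃ a ∈ A, ∃ a' ∈ A, ∃ b ∈ B, ∃ b' ∈ B,
      z = max (D a b + D a' b') (D a b' + D a' b) - D a a' - D b b'}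

/-- Adjacency in the graph `Γ_f`: vertices are points of the support of `f`,
and `x y` are joined iff `f x + f y > D x y`. -/
def adj (D : X → X → ℝ) (f : X → ℝ) (x y : X) : Prop :=
  x ≠ y ∧ f x ≠ 0 ∧ f y ≠ 0 ∧ D x y < f x + f y

/-- The graph `Γ_f` (on vertex set `supp f`) is disconnected. -/
def Disconn (D : X → X → ℝ) (f : X → ℝ) : Prop :=
  ∃ U V : Set X, U.Nonempty ∧ V.Nonempty ∧ Disjoint U V ∧
    U ∪ V = {x | f x ≠ 0} ∧ ∀ u ∈ U, ∀ v ∈ V, ¬ adj D f u v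

/-- `Γ_f` is the disjoint union of two cliques with vertex sets `A` and `B`. -/
def DisjUnionTwoCliques (D : X → X → ℝ) (f : X → ℝ) (A B : Set X) : Prop :=
  A.Nonempty ∧ B.Nonempty ∧ Disjoint A B ∧ A ∪ B = {x | f x ≠ 0} ∧
  (∀ a ∈ A, ∀ a' ∈ A, a ≠ a' → adj D f a a') ∧
  (∀ b ∈ B, ∀ b' ∈ B, b ≠ b' → adj D f b b') ∧
  (∀ a ∈ A, ∀ b ∈ B, ¬ adj D f a b)

/-- `A|B` is a block split of `X` relative to `D`. -/
def IsBlockSplit (D : X → X → ℝ) (A B : Set X) : Prop :=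
  ∃ f : X → ℝ, memP D f ∧ (∀ x, f x ≠ 0) ∧ DisjUnionTwoCliques D f A B

/-- `f` lies in the tight span `T(D)`:  `f x = max_y (D x y - f y)` for all `x`. -/
def memT (D : X → X → ℝ) (f : X → ℝ) : Prop :=
  ∀ x, IsGreatest (Set.range fun y => D x y - f y) (f x)

/-- The endpoint map `f_A = f_{A→α_S, B→0}` of the segment associated with a block split. -/
noncomputable def endpointA (D : X → X → ℝ) (A B : Set X) : X → ℝ :=
  fun x => if x ∈ A then kdist D x B - isoIdx D A B else kdist D x A

/-- The endpoint map `f_B = f_{A→0, B→α_S}` of the segment associated with a block split. -/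
noncomputable def endpointB (D : X → X → ℝ) (A B : Set X) : X → ℝ :=
  fun x => if x ∈ A then kdist D x B else kdist D x A - isoIdx D A B

/-- `A|B` is a split (bipartition into nonempty parts) of `X`. -/
def IsSplit (A B : Set X) : Prop :=
  A.Nonempty ∧ B.Nonempty ∧ Disjoint A B ∧ A ∪ B = Set.univ

/-!
Under the four-point condition, each term
`max(D a' b' + D a'' b'', D a' b'' + D a'' b') − D a' a'' − D b' b''` of `2 α_S` splits as `(D a b' + D a b'' − D b' b'') + (D b a' + D b a'' − D a' a'') − 2 D a b`,
the two brackets being exactly the terms of `2 D(a|B)` and `2 D(b|A)`. The set of terms of `2 α_S`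
is therefore a translate of the Minkowski sum of those of `2 D(a|B)` and `2 D(b|A)`, and an infimum
of a Minkowski sum is the sum of the infima. All these infima exist because the terms of
`D(x|Y)` are nonnegative by the triangle inequality.
-/

open Pointwise

section VirtualDistance

variable (D : X → X → ℝ)

def vdistTerms (f : X → ℝ) (Y : Set X) : Set ℝ :=
  {z | ∃ y ∈ Y, ∃ y' ∈ Y, z = f y + f y' - D y y'}

def isoIdxTerms (A B : Set X) : Set ℝ :=
  {z | ∃ a ∈ A, ∃ a' ∈ A, ∃ b ∈ B, ∃ b' ∈ B,
      z = max (D a b + D a' b') (D a b' + D a' b) - D a a' - D b b'}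

theorem kdist_eq_half_sInf (x : X) (Y : Set X) :
    kdist D x Y = 1 / 2 * sInf (vdistTerms D (D x) Y) := rfl

theorem isoIdx_eq_half_sInf (A B : Set X) :
    isoIdx D A B = 1 / 2 * sInf (isoIdxTerms D A B) := rfl

theorem vdistTerms_nonempty {Y : Set X} (hY : Y.Nonempty) (f : X → ℝ) :
    (vdistTerms D f Y).Nonempty :=
  let ⟨y, hy⟩ := hY
  ⟨_, y, hy, y, hy, rfl⟩

theorem bddBelow_vdistTerms_kuratowski (hsymm : ∀ x y, D x y = D y x)
    (htri : ∀ x y z, D x z ≤ D x y + D y z) (x : X) (Y : Set X) :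
    BddBelow (vdistTerms D (D x) Y) := by
  refine ⟨0, ?_⟩
  rintro z ⟨y, -, y', -, rfl⟩
  linarith [htri y x y', hsymm x y]

end VirtualDistance

section FourPointCondition

variable {D : X → X → ℝ} {A B : Set X}
  (hsymm : ∀ x y, D x y = D y x)
  (h4 : ∀ a ∈ A, ∀ a' ∈ A, ∀ b ∈ B, ∀ b' ∈ B, D a b + D a' b' = D a b' + D a' b)
  {a : X} (ha : a ∈ A) {b : X} (hb : b ∈ B)
include hsymm h4 ha hb

theorem isoIdx_term_eq {a' a'' b' b'' : X} (ha' : a' ∈ A) (ha'' : a'' ∈ A)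
    (hb' : b' ∈ B) (hb'' : b'' ∈ B) :
    max (D a' b' + D a'' b'') (D a' b'' + D a'' b') - D a' a'' - D b' b''
      = (D a b' + D a b'' - D b' b'') + (D b a' + D b a'' - D a' a'') + -(2 * D a b) := by
  rw [max_eq_left (h4 a' ha' a'' ha'' b' hb' b'' hb'').ge]
  linarith [h4 a ha a' ha' b hb b' hb', h4 a ha a'' ha'' b hb b'' hb'', hsymm b a', hsymm b a'']

theorem isoIdxTerms_eq :
    isoIdxTerms D A B = vdistTerms D (D a) B + vdistTerms D (D b) A + {-(2 * D a b)} := by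
  ext z
  simp only [isoIdxTerms, vdistTerms, Set.mem_add, Set.mem_singleton_iff, Set.mem_ofPred_eq]
  constructor
  · rintro ⟨a', ha', a'', ha'', b', hb', b'', hb'', rfl⟩
    exact ⟨_, ⟨_, ⟨b', hb', b'', hb'', rfl⟩, _, ⟨a', ha', a'', ha'', rfl⟩, rfl⟩, _, rfl,
      (isoIdx_term_eq hsymm h4 ha hb ha' ha'' hb' hb'').symm⟩
  · rintro ⟨_, ⟨_, ⟨b', hb', b'', hb'', rfl⟩, _, ⟨a', ha', a'', ha'', rfl⟩, rfl⟩, _, rfl, rfl⟩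
    exact ⟨a', ha', a'', ha'', b', hb', b'', hb'',
      (isoIdx_term_eq hsymm h4 ha hb ha' ha'' hb' hb'').symm⟩

end FourPointCondition

theorem stmt1_general (D : X → X → ℝ) (hD : IsMetric D) (A B : Set X)
    (h4 : ∀ a ∈ A, ∀ a' ∈ A, ∀ b ∈ B, ∀ b' ∈ B, D a b + D a' b' = D a b' + D a' b) :
    ∀ a ∈ A, ∀ b ∈ B, kdist D a B + kdist D b A - D a b = isoIdx D A B := by
  obtain ⟨-, hsymm, htri, -⟩ := hD
  intro a ha b hb
  have hB := vdistTerms_nonempty D ⟨b, hb⟩ (D a)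
  have hA := vdistTerms_nonempty D ⟨a, ha⟩ (D b)
  have hBbdd := bddBelow_vdistTerms_kuratowski D hsymm htri a B
  have hAbdd := bddBelow_vdistTerms_kuratowski D hsymm htri b A
  rw [kdist_eq_half_sInf, kdist_eq_half_sInf, isoIdx_eq_half_sInf,
    isoIdxTerms_eq hsymm h4 ha hb, csInf_add (hB.add hA) (hBbdd.add hAbdd)
      (Set.singleton_nonempty _) bddBelow_singleton, csInf_singleton,
    csInf_add hB hBbdd hA hAbdd]
  ring

theorem stmt1 [Fintype X] (D : X → X → ℝ) (hD : IsMetric D) (A B : Set X)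
    (hS : IsSplit A B)
    (h4 : ∀ a ∈ A, ∀ a' ∈ A, ∀ b ∈ B, ∀ b' ∈ B, D a b + D a' b' = D a b' + D a' b) :
    ∀ a ∈ A, ∀ b ∈ B, kdist D a B + kdist D b A - D a b = isoIdx D A B :=
  stmt1_general D hD A B h4
end

section
/- Let D be a metric on a finite set X and S = A|B a block split of X. If f ∈ P(D) satisfies f(a) + f(b) = D(a,b) for all a ∈ A and b ∈ B, then there exist γ_A, γ_B ≥ 0 with γ_A + γ_B = α_S such that f(a) = D(a|B) − γ_A for all a ∈ A and f(b) = D(b|A) − γ_B for all b ∈ B. Consequently, the set T(D|S) := {f ∈ P(D) : every edge of Γ_f lies within A or within B} is a line segment in ℝ^X parametrized by {(γ_A,γ_B) ∈ ℝ²_{≥0} : γ_A + γ_B = α_S}. -/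
/-!
If `f ∈ P(D)` is tight across `A|B`, i.e. `f a + f b = D a b`, then every quantity in the
statement is computed from `f`: `D(a|B) = f a + D(f|B)`, `D(b|A) = f b + D(f|A)` and
`α_S = D(f|A) + D(f|B)`. Hence `f` lies on the segment with `γ_A = D(f|B)`, `γ_B = D(f|A)`.
Conversely a point of the segment is `f` shifted by one constant on `A` and another on `B`; it
stays tight across `A|B`, and the minimality of `D(f|A)`, `D(f|B)` keeps it in `P(D)`.
-/

open Classical

variable {X : Type*}

/-- The set `T(D|S)` for the split `S = A|B`. -/
def memTSplit (D : X → X → ℝ) (A B : Set X) (g : X → ℝ) : Prop :=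
  memP D g ∧
    ∀ x y : X, x ≠ y → D x y < g x + g y → (x ∈ A ∧ y ∈ A) ∨ (x ∈ B ∧ y ∈ B)

def memSegment (D : X → X → ℝ) (A B : Set X) (g : X → ℝ) : Prop :=
  ∃ γA γB : ℝ, 0 ≤ γA ∧ 0 ≤ γB ∧ γA + γB = isoIdx D A B ∧
    (∀ a ∈ A, g a = kdist D a B - γA) ∧ (∀ b ∈ B, g b = kdist D b A - γB)

lemma IsBlockSplit.isSplit {D : X → X → ℝ} {A B : Set X} (h : IsBlockSplit D A B) :
    IsSplit A B := by
  obtain ⟨f, -, hf, hA, hB, hdisj, hcover, -⟩ := h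
  exact ⟨hA, hB, hdisj, hcover.trans (Set.eq_univ_of_forall hf)⟩

lemma IsSplit.memTSplit_iff {D : X → X → ℝ} {A B : Set X} {g : X → ℝ} (hS : IsSplit A B)
    (hsymm : ∀ x y, D x y = D y x) :
    memTSplit D A B g ↔ memP D g ∧ ∀ a ∈ A, ∀ b ∈ B, g a + g b = D a b := by
  obtain ⟨-, -, hdisj, hcover⟩ := hS
  constructor
  · rintro ⟨hg, hedge⟩
    refine ⟨hg, fun a ha b hb => le_antisymm (not_lt.1 fun hlt => ?_) (hg a b)⟩
    rcases hedge a b (hdisj.ne_of_mem ha hb) hlt with ⟨-, hbA⟩ | ⟨haB, -⟩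
    · exact hdisj.ne_of_mem hbA hb rfl
    · exact hdisj.ne_of_mem ha haB rfl
  · rintro ⟨hg, hcross⟩
    refine ⟨hg, fun x y _ hlt => ?_⟩
    have hx : x ∈ A ∪ B := hcover ▸ Set.mem_univ x
    have hy : y ∈ A ∪ B := hcover ▸ Set.mem_univ y
    rcases hx with hx | hx <;> rcases hy with hy | hy
    · exact Or.inl ⟨hx, hy⟩
    · exact absurd (hcross x hx y hy) hlt.ne'
    · rw [hsymm, add_comm] at hlt
      exact absurd (hcross y hy x hx) hlt.ne'
    · exact Or.inr ⟨hx, hy⟩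

section Extremal

variable [Finite X] (D : X → X → ℝ)

lemma isLeast_two_mul_vdist (f : X → ℝ) {Y : Set X} (hY : Y.Nonempty) :
    IsLeast {z | ∃ y ∈ Y, ∃ y' ∈ Y, z = f y + f y' - D y y'} (2 * vdist D f Y) := by
  obtain ⟨y₀, hy₀⟩ := hY
  have hfin : {z | ∃ y ∈ Y, ∃ y' ∈ Y, z = f y + f y' - D y y'}.Finite :=
    (Set.finite_range fun p : X × X => f p.1 + f p.2 - D p.1 p.2).subset
      (by rintro _ ⟨y, -, y', -, rfl⟩; exact ⟨(y, y'), rfl⟩)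
  rw [vdist, ← mul_assoc, mul_one_div_cancel two_ne_zero, one_mul]
  exact hfin.isCompact.isLeast_sInf ⟨_, y₀, hy₀, y₀, hy₀, rfl⟩

lemma isLeast_two_mul_isoIdx {A B : Set X} (hA : A.Nonempty) (hB : B.Nonempty) :
    IsLeast {z | ∃ a ∈ A, ∃ a' ∈ A, ∃ b ∈ B, ∃ b' ∈ B,
      z = max (D a b + D a' b') (D a b' + D a' b) - D a a' - D b b'} (2 * isoIdx D A B) := by
  obtain ⟨a₀, ha₀⟩ := hA
  obtain ⟨b₀, hb₀⟩ := hB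
  have hfin : {z | ∃ a ∈ A, ∃ a' ∈ A, ∃ b ∈ B, ∃ b' ∈ B,
      z = max (D a b + D a' b') (D a b' + D a' b) - D a a' - D b b'}.Finite :=
    (Set.finite_range fun p : (X × X) × X × X =>
      max (D p.1.1 p.2.1 + D p.1.2 p.2.2) (D p.1.1 p.2.2 + D p.1.2 p.2.1)
        - D p.1.1 p.1.2 - D p.2.1 p.2.2).subset
      (by rintro _ ⟨a, -, a', -, b, -, b', -, rfl⟩; exact ⟨((a, a'), b, b'), rfl⟩)
  rw [isoIdx, ← mul_assoc, mul_one_div_cancel two_ne_zero, one_mul]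
  exact hfin.isCompact.isLeast_sInf ⟨_, a₀, ha₀, a₀, ha₀, b₀, hb₀, b₀, hb₀, rfl⟩

end Extremal

lemma vdist_eq_of_isLeast {D : X → X → ℝ} {f : X → ℝ} {Y : Set X} {v : ℝ}
    (h : IsLeast {z | ∃ y ∈ Y, ∃ y' ∈ Y, z = f y + f y' - D y y'} (2 * v)) :
    vdist D f Y = v := by
  rw [vdist, h.csInf_eq]
  ring

lemma isoIdx_eq_of_isLeast {D : X → X → ℝ} {A B : Set X} {v : ℝ}
    (h : IsLeast {z | ∃ a ∈ A, ∃ a' ∈ A, ∃ b ∈ B, ∃ b' ∈ B,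
      z = max (D a b + D a' b') (D a b' + D a' b) - D a a' - D b b'} (2 * v)) :
    isoIdx D A B = v := by
  rw [isoIdx, h.csInf_eq]
  ring

section VirtualDistance

variable [Finite X] {D : X → X → ℝ} {A B Y : Set X} {f : X → ℝ}

lemma two_mul_vdist_le {y y' : X} (hy : y ∈ Y) (hy' : y' ∈ Y) :
    2 * vdist D f Y ≤ f y + f y' - D y y' :=
  (isLeast_two_mul_vdist D f ⟨y, hy⟩).2 ⟨y, hy, y', hy', rfl⟩

lemma vdist_nonneg (hf : memP D f) (hY : Y.Nonempty) : 0 ≤ vdist D f Y := by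
  obtain ⟨y, -, y', -, hv⟩ := (isLeast_two_mul_vdist D f hY).1
  linarith [hf y y']

lemma kdist_eq_add_vdist {x : X} (hY : Y.Nonempty) (h : ∀ y ∈ Y, D x y = f x + f y) :
    kdist D x Y = f x + vdist D f Y := by
  refine vdist_eq_of_isLeast ⟨?_, ?_⟩
  · obtain ⟨y, hy, y', hy', hv⟩ := (isLeast_two_mul_vdist D f hY).1
    exact ⟨y, hy, y', hy', by rw [h y hy, h y' hy']; linarith⟩
  · rintro _ ⟨y, hy, y', hy', rfl⟩
    rw [h y hy, h y' hy']
    linarith [two_mul_vdist_le (D := D) (f := f) hy hy']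

lemma isoIdx_eq_vdist_add_vdist (hA : A.Nonempty) (hB : B.Nonempty)
    (hfe : ∀ a ∈ A, ∀ b ∈ B, f a + f b = D a b) :
    isoIdx D A B = vdist D f A + vdist D f B := by
  -- tightness across `A|B` makes both sums in the max equal to `f a + f a' + f b + f b'`
  have hterm : ∀ a ∈ A, ∀ a' ∈ A, ∀ b ∈ B, ∀ b' ∈ B,
      max (D a b + D a' b') (D a b' + D a' b) - D a a' - D b b' =
        (f a + f a' - D a a') + (f b + f b' - D b b') := by
    intro a ha a' ha' b hb b' hb'
    rw [← hfe a ha b hb, ← hfe a' ha' b' hb', ← hfe a ha b' hb', ← hfe a' ha' b hb,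
      show f a + f b' + (f a' + f b) = f a + f b + (f a' + f b') by ring, max_self]
    ring
  refine isoIdx_eq_of_isLeast ⟨?_, ?_⟩
  · obtain ⟨a, ha, a', ha', hvA⟩ := (isLeast_two_mul_vdist D f hA).1
    obtain ⟨b, hb, b', hb', hvB⟩ := (isLeast_two_mul_vdist D f hB).1
    exact ⟨a, ha, a', ha', b, hb, b', hb', by rw [hterm a ha a' ha' b hb b' hb']; linarith⟩
  · rintro _ ⟨a, ha, a', ha', b, hb, b', hb', rfl⟩
    rw [hterm a ha a' ha' b hb b' hb']
    linarith [two_mul_vdist_le (D := D) (f := f) ha ha', two_mul_vdist_le (D := D) (f := f) hb hb']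

end VirtualDistance

section Segment

variable [Finite X] {D : X → X → ℝ} {A B : Set X} {f g : X → ℝ}

lemma kdist_eq_add_vdist_of_mem_left {a : X} (hB : B.Nonempty)
    (hfe : ∀ a ∈ A, ∀ b ∈ B, f a + f b = D a b) (ha : a ∈ A) :
    kdist D a B = f a + vdist D f B :=
  kdist_eq_add_vdist hB fun b hb => (hfe a ha b hb).symm

lemma kdist_eq_add_vdist_of_mem_right {b : X} (hsymm : ∀ x y, D x y = D y x) (hA : A.Nonempty)
    (hfe : ∀ a ∈ A, ∀ b ∈ B, f a + f b = D a b) (hb : b ∈ B) :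
    kdist D b A = f b + vdist D f A :=
  kdist_eq_add_vdist hA fun a ha => by rw [hsymm, ← hfe a ha b hb, add_comm]

lemma memSegment_of_cross_tight (hsymm : ∀ x y, D x y = D y x) (hA : A.Nonempty)
    (hB : B.Nonempty) (hf : memP D f) (hfe : ∀ a ∈ A, ∀ b ∈ B, f a + f b = D a b) :
    memSegment D A B f :=
  ⟨vdist D f B, vdist D f A, vdist_nonneg hf hB, vdist_nonneg hf hA,
    by rw [isoIdx_eq_vdist_add_vdist hA hB hfe, add_comm],
    fun a ha => by rw [kdist_eq_add_vdist_of_mem_left hB hfe ha]; ring,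
    fun b hb => by rw [kdist_eq_add_vdist_of_mem_right hsymm hA hfe hb]; ring⟩

lemma memSegment.memP_and_cross_tight (hg : memSegment D A B g) (hS : IsSplit A B)
    (hsymm : ∀ x y, D x y = D y x) (hfe : ∀ a ∈ A, ∀ b ∈ B, f a + f b = D a b) :
    memP D g ∧ ∀ a ∈ A, ∀ b ∈ B, g a + g b = D a b := by
  obtain ⟨hA, hB, -, hcover⟩ := hS
  obtain ⟨γA, γB, hγA, hγB, hsum, hgA, hgB⟩ := hg
  rw [isoIdx_eq_vdist_add_vdist hA hB hfe] at hsum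
  have hgA' : ∀ a ∈ A, g a = f a + (vdist D f B - γA) := fun a ha => by
    rw [hgA a ha, kdist_eq_add_vdist_of_mem_left hB hfe ha]; ring
  have hgB' : ∀ b ∈ B, g b = f b + (vdist D f A - γB) := fun b hb => by
    rw [hgB b hb, kdist_eq_add_vdist_of_mem_right hsymm hA hfe hb]; ring
  have hcross : ∀ a ∈ A, ∀ b ∈ B, g a + g b = D a b := fun a ha b hb => by
    rw [hgA' a ha, hgB' b hb, ← hfe a ha b hb]; linarith
  refine ⟨fun x y => ?_, hcross⟩
  have hx : x ∈ A ∪ B := hcover ▸ Set.mem_univ x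
  have hy : y ∈ A ∪ B := hcover ▸ Set.mem_univ y
  rcases hx with hx | hx <;> rcases hy with hy | hy
  · rw [hgA' x hx, hgA' y hy]
    linarith [two_mul_vdist_le (D := D) (f := f) hx hy]
  · exact (hcross x hx y hy).ge
  · rw [hsymm, add_comm]
    exact (hcross y hy x hx).ge
  · rw [hgB' x hx, hgB' y hy]
    linarith [two_mul_vdist_le (D := D) (f := f) hx hy]

end Segment

theorem stmt4 [Fintype X] (D : X → X → ℝ) (hD : IsMetric D) (A B : Set X)
    (hBS : IsBlockSplit D A B) (f : X → ℝ) (hf : memP D f)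
    (hfe : ∀ a ∈ A, ∀ b ∈ B, f a + f b = D a b) :
    (∃ γA γB : ℝ, 0 ≤ γA ∧ 0 ≤ γB ∧ γA + γB = isoIdx D A B ∧
      (∀ a ∈ A, f a = kdist D a B - γA) ∧ (∀ b ∈ B, f b = kdist D b A - γB)) ∧
    ({g : X → ℝ | memP D g ∧ ∀ x y : X, x ≠ y → D x y < g x + g y →
        (x ∈ A ∧ y ∈ A) ∨ (x ∈ B ∧ y ∈ B)} =
      {g : X → ℝ | ∃ γA γB : ℝ, 0 ≤ γA ∧ 0 ≤ γB ∧ γA + γB = isoIdx D A B ∧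
        (∀ a ∈ A, g a = kdist D a B - γA) ∧ (∀ b ∈ B, g b = kdist D b A - γB)}) := by
  have hS := hBS.isSplit
  have hsymm := hD.2.1
  refine ⟨memSegment_of_cross_tight hsymm hS.1 hS.2.1 hf hfe, Set.ext fun g => ?_⟩
  change memTSplit D A B g ↔ memSegment D A B g
  rw [hS.memTSplit_iff hsymm]
  exact ⟨fun ⟨hgP, hge⟩ => memSegment_of_cross_tight hsymm hS.1 hS.2.1 hgP hge,
    fun hg => hg.memP_and_cross_tight hS hsymm hfe⟩
end

section
/- Let D be a metric on a finite set X, x ∈ X, X' := X \ {x}, and D' the restriction of D to X'. If S = A|B is a block split of X relative to D, then either S = {x}|X' or the restriction (A ∩ X')|(B ∩ X') of S to X' is a block split of X' relative to D'. -/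
open Classical

variable {X : Type*}

/-! Every ingredient of a block split restricts to a subset `Y ⊆ X`: the inequalities `f ∈ P(D)`,
the nonvanishing of `f`, and adjacency in `Γ_f`, which only involves the two endpoints. So the
restriction of `f` witnesses that `(A ∩ Y)|(B ∩ Y)` is a block split of `Y`, as soon as both parts
are nonempty. For `Y = X \ {x}` a part becomes empty only if it was `{x}`. -/

theorem Set.exists_mem_ne_of_ne_singleton {S : Set X} {x : X} (hS : S.Nonempty)
    (hSx : S ≠ {x}) : ∃ a ∈ S, a ≠ x := by
  obtain ⟨a, ha, hax⟩ := Set.not_subset.mp (mt hS.subset_singleton_iff.mp hSx)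
  exact ⟨a, ha, hax⟩

section Restriction

variable {p : X → Prop} {D : X → X → ℝ} {f : X → ℝ} {A B : Set X}

theorem adj_subtype_iff (u v : Subtype p) :
    adj (fun u v : Subtype p => D u.1 v.1) (fun u => f u.1) u v ↔ adj D f u.1 v.1 := by
  simp only [adj, ne_eq, Subtype.ext_iff]

theorem DisjUnionTwoCliques.subtype (h : DisjUnionTwoCliques D f A B)
    (hA : ∃ a ∈ A, p a) (hB : ∃ b ∈ B, p b) :
    DisjUnionTwoCliques (fun u v : Subtype p => D u.1 v.1) (fun u => f u.1)
      {u : Subtype p | u.1 ∈ A} {u : Subtype p | u.1 ∈ B} := by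
  obtain ⟨-, -, hdisj, hunion, hAclique, hBclique, hAB⟩ := h
  obtain ⟨a, ha, hpa⟩ := hA
  obtain ⟨b, hb, hpb⟩ := hB
  refine ⟨⟨⟨a, hpa⟩, ha⟩, ⟨⟨b, hpb⟩, hb⟩, ?_, ?_, ?_, ?_, ?_⟩
  · exact Set.disjoint_left.mpr fun u huA huB => Set.disjoint_left.mp hdisj huA huB
  · ext u
    exact Set.ext_iff.mp hunion u.1
  · exact fun u hu u' hu' hne =>
      (adj_subtype_iff u u').mpr (hAclique u hu u' hu' (Subtype.coe_ne_coe.mpr hne))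
  · exact fun u hu u' hu' hne =>
      (adj_subtype_iff u u').mpr (hBclique u hu u' hu' (Subtype.coe_ne_coe.mpr hne))
  · exact fun u hu v hv huv => hAB u hu v hv ((adj_subtype_iff u v).mp huv)

theorem IsBlockSplit.subtype (h : IsBlockSplit D A B) (hA : ∃ a ∈ A, p a) (hB : ∃ b ∈ B, p b) :
    IsBlockSplit (fun u v : Subtype p => D u.1 v.1)
      {u : Subtype p | u.1 ∈ A} {u : Subtype p | u.1 ∈ B} := by
  obtain ⟨f, hfP, hf0, hcliques⟩ := h
  exact ⟨fun u => f u.1, fun u v => hfP u.1 v.1, fun u => hf0 u.1, hcliques.subtype hA hB⟩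

end Restriction

theorem stmt5_general (D : X → X → ℝ) (x : X)
    (A B : Set X) (hBS : IsBlockSplit D A B) :
    (A = {x} ∨ B = {x}) ∨
      IsBlockSplit (fun u v : {y : X // y ≠ x} => D u.1 v.1)
        {u : {y : X // y ≠ x} | u.1 ∈ A} {u : {y : X // y ≠ x} | u.1 ∈ B} := by
  by_cases hAx : A = {x}
  · exact Or.inl (Or.inl hAx)
  by_cases hBx : B = {x}
  · exact Or.inl (Or.inr hBx)
  have ⟨_, _, _, hA, hB, _⟩ := hBS
  exact Or.inr (hBS.subtype (Set.exists_mem_ne_of_ne_singleton hA hAx)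
    (Set.exists_mem_ne_of_ne_singleton hB hBx))

theorem stmt5 [Fintype X] (D : X → X → ℝ) (hD : IsMetric D) (x : X)
    (A B : Set X) (hBS : IsBlockSplit D A B) :
    (A = {x} ∨ B = {x}) ∨
      IsBlockSplit (fun u v : {y : X // y ≠ x} => D u.1 v.1)
        {u : {y : X // y ≠ x} | u.1 ∈ A} {u : {y : X // y ≠ x} | u.1 ∈ B} :=
  stmt5_general D x A B hBS
end

section
/- Let D be a metric on a finite set X. Any two block splits A₁|B₁ and A₂|B₂ of X relative to D are compatible, i.e., at least one of the four intersections A₁∩A₂, A₁∩B₂, B₁∩A₂, B₁∩B₂ is empty. -/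
open Classical

variable {X : Type*}

/-!
If `Γ_f` splits into the cliques `A` and `B`, then for `p, q ∈ A` and `r, s ∈ B` the edges `pq`,
`rs` and the non-edges `pr`, `qs` give `D p q + D r s < f p + f q + f r + f s ≤ D p r + D q s`.
Four points, one in each intersection of two incompatible block splits, would satisfy this
inequality in both directions.
-/

section

variable {D : X → X → ℝ} {f : X → ℝ} {A B : Set X}

namespace DisjUnionTwoCliques

theorem dist_lt_of_mem_left (h : DisjUnionTwoCliques D f A B) {a a' : X} (ha : a ∈ A)
    (ha' : a' ∈ A) (hne : a ≠ a') : D a a' < f a + f a' :=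
  (h.2.2.2.2.1 a ha a' ha' hne).2.2.2

theorem dist_lt_of_mem_right (h : DisjUnionTwoCliques D f A B) {b b' : X} (hb : b ∈ B)
    (hb' : b' ∈ B) (hne : b ≠ b') : D b b' < f b + f b' :=
  (h.2.2.2.2.2.1 b hb b' hb' hne).2.2.2

theorem add_le_dist (h : DisjUnionTwoCliques D f A B) {a b : X} (ha : a ∈ A) (hb : b ∈ B) :
    f a + f b ≤ D a b := by
  obtain ⟨-, -, hdisj, hsupp, -, -, hnonadj⟩ := h
  have hfa : f a ≠ 0 := (hsupp ▸ Set.mem_union_left B ha :)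
  have hfb : f b ≠ 0 := (hsupp ▸ Set.mem_union_right A hb :)
  by_contra! hlt
  exact hnonadj a ha b hb ⟨hdisj.ne_of_mem ha hb, hfa, hfb, hlt⟩

theorem dist_add_dist_lt (h : DisjUnionTwoCliques D f A B) {p q r s : X} (hp : p ∈ A)
    (hq : q ∈ A) (hr : r ∈ B) (hs : s ∈ B) (hpq : p ≠ q) (hrs : r ≠ s) :
    D p q + D r s < D p r + D q s := by
  linarith [h.dist_lt_of_mem_left hp hq hpq, h.dist_lt_of_mem_right hr hs hrs,
    h.add_le_dist hp hr, h.add_le_dist hq hs]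

end DisjUnionTwoCliques

theorem IsBlockSplit.disjoint (h : IsBlockSplit D A B) : Disjoint A B :=
  h.choose_spec.2.2.2.2.1

theorem IsBlockSplit.dist_add_dist_lt (h : IsBlockSplit D A B) {p q r s : X} (hp : p ∈ A)
    (hq : q ∈ A) (hr : r ∈ B) (hs : s ∈ B) (hpq : p ≠ q) (hrs : r ≠ s) :
    D p q + D r s < D p r + D q s :=
  h.choose_spec.2.2.dist_add_dist_lt hp hq hr hs hpq hrs

end

theorem stmt6_general (D : X → X → ℝ)
    (A₁ B₁ A₂ B₂ : Set X) (h1 : IsBlockSplit D A₁ B₁) (h2 : IsBlockSplit D A₂ B₂) :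
    A₁ ∩ A₂ = ∅ ∨ A₁ ∩ B₂ = ∅ ∨ B₁ ∩ A₂ = ∅ ∨ B₁ ∩ B₂ = ∅ := by
  by_contra! h
  obtain ⟨⟨p, hp₁, hp₂⟩, ⟨q, hq₁, hq₂⟩, ⟨r, hr₁, hr₂⟩, ⟨s, hs₁, hs₂⟩⟩ := h
  have hpq : p ≠ q := h2.disjoint.ne_of_mem hp₂ hq₂
  have hrs : r ≠ s := h2.disjoint.ne_of_mem hr₂ hs₂
  have hpr : p ≠ r := h1.disjoint.ne_of_mem hp₁ hr₁
  have hqs : q ≠ s := h1.disjoint.ne_of_mem hq₁ hs₁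
  linarith [h1.dist_add_dist_lt hp₁ hq₁ hr₁ hs₁ hpq hrs,
    h2.dist_add_dist_lt hp₂ hr₂ hq₂ hs₂ hpr hqs]

theorem stmt6 [Fintype X] (D : X → X → ℝ) (hD : IsMetric D)
    (A₁ B₁ A₂ B₂ : Set X) (h1 : IsBlockSplit D A₁ B₁) (h2 : IsBlockSplit D A₂ B₂) :
    A₁ ∩ A₂ = ∅ ∨ A₁ ∩ B₂ = ∅ ∨ B₁ ∩ A₂ = ∅ ∨ B₁ ∩ B₂ = ∅ :=
  stmt6_general D A₁ B₁ A₂ B₂ h1 h2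
end

section
/- Let D be a metric on a finite set X. If f ∈ P(D) and the graph Γ_f is disconnected (viewing Γ_f as a graph on vertex set supp(f)), then f is contained in the tight span T(D), i.e., f(x) = max_{y ∈ X}(D(x,y) − f(y)) holds for all x ∈ X. -/
open Classical

variable {X : Type*}

/-!
A point `f ∈ P(D)` lies in `T(D)` as soon as every `x` has a partner `y` with
`D x y = f x + f y`. For `f x = 0` the partner is `x` itself. Otherwise `x` lies on one
side of a partition of `supp f` with no edges of `Γ_f` across, and any `y` on the other side is a
non-neighbour, so `D x y ≥ f x + f y`, which is an equality because `f ∈ P(D)`.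
-/

variable {D : X → X → ℝ} {f : X → ℝ}

theorem memT_of_forall_exists_eq_add (hf : memP D f) (h : ∀ x, ∃ y, D x y = f x + f y) :
    memT D f := by
  intro x
  obtain ⟨y, hy⟩ := h x
  refine ⟨⟨y, show D x y - f y = f x by linarith⟩, ?_⟩
  rintro _ ⟨z, rfl⟩
  linarith [hf x z]

theorem eq_add_of_not_adj (hf : memP D f) {x y : X} (hne : x ≠ y) (hx : f x ≠ 0) (hy : f y ≠ 0)
    (h : ¬ adj D f x y) : D x y = f x + f y :=
  le_antisymm (hf x y) (not_lt.mp fun hlt => h ⟨hne, hx, hy, hlt⟩)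

theorem Disconn.exists_eq_add (hD : IsMetric D) (hf : memP D f) (hdis : Disconn D f) (x : X) :
    ∃ y, D x y = f x + f y := by
  obtain ⟨U, V, ⟨u, hu⟩, ⟨v, hv⟩, hUV, hsupp, hno⟩ := hdis
  have hsupp_of_mem : ∀ {z}, z ∈ U ∪ V → f z ≠ 0 := fun hz => by rwa [hsupp] at hz
  by_cases hx : f x = 0
  · exact ⟨x, by rw [hD.1 x, hx, zero_add]⟩
  have hxUV : x ∈ U ∪ V := by rw [hsupp]; exact hx
  rcases hxUV with hxU | hxV
  · exact ⟨v, eq_add_of_not_adj hf (hUV.ne_of_mem hxU hv) hx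
      (hsupp_of_mem (Or.inr hv)) (hno x hxU v hv)⟩
  · refine ⟨u, ?_⟩
    rw [hD.2.1, add_comm]
    exact eq_add_of_not_adj hf (hUV.ne_of_mem hu hxV) (hsupp_of_mem (Or.inl hu)) hx
      (hno u hu x hxV)

theorem stmt10_general (D : X → X → ℝ) (hD : IsMetric D)
    (f : X → ℝ) (hf : memP D f) (hdis : Disconn D f) :
    memT D f :=
  memT_of_forall_exists_eq_add hf (hdis.exists_eq_add hD hf)

theorem stmt10 [Fintype X] (D : X → X → ℝ) (hD : IsMetric D)
    (f : X → ℝ) (hf : memP D f) (hdis : Disconn D f) :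
    memT D f :=
  stmt10_general D hD f hf hdis
end

section
/- Let D be a metric on a finite set X with at least 4 elements, and suppose A₁|B₁ and A₂|B₂ are splits of X such that for i = 1,2 there exist maps f_i ∈ P(D) with supp(f_i) = X and Γ_{f_i} the disjoint union of two cliques on A_i and B_i. If a ∈ A₁∩A₂, b ∈ B₁∩A₂, c ∈ A₁∩B₂, d ∈ B₁∩B₂, then D(a,b) + D(c,d) < D(a,c) + D(b,d) and D(a,c) + D(b,d) < D(a,b) + D(c,d), a contradiction; hence no such four elements exist. -/
open Classical

variable {X : Type*}

namespace DisjUnionTwoCliques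

variable {D : X → X → ℝ} {f : X → ℝ} {A B : Set X}

lemma ne_zero_of_mem_left (h : DisjUnionTwoCliques D f A B) {x : X} (hx : x ∈ A) : f x ≠ 0 := by
  have hx' : x ∈ A ∪ B := Or.inl hx
  rwa [h.2.2.2.1] at hx'

lemma ne_zero_of_mem_right (h : DisjUnionTwoCliques D f A B) {x : X} (hx : x ∈ B) : f x ≠ 0 := by
  have hx' : x ∈ A ∪ B := Or.inr hx
  rwa [h.2.2.2.1] at hx'

lemma add_eq_of_mem_of_mem (hf : memP D f) (h : DisjUnionTwoCliques D f A B) {a b : X}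
    (ha : a ∈ A) (hb : b ∈ B) : f a + f b = D a b := by
  refine le_antisymm (not_lt.mp fun hlt => h.2.2.2.2.2.2 a ha b hb ?_) (hf a b)
  exact ⟨h.2.2.1.ne_of_mem ha hb, h.ne_zero_of_mem_left ha, h.ne_zero_of_mem_right hb, hlt⟩

/-- `f a + f b + f c + f d` equals the right side (no edges between the cliques) and exceeds the
left side (edges inside them). -/
lemma add_lt_add_of_mem (hf : memP D f) (h : DisjUnionTwoCliques D f A B) {a b c d : X}
    (ha : a ∈ A) (hc : c ∈ A) (hb : b ∈ B) (hd : d ∈ B) (hac : a ≠ c) (hbd : b ≠ d) :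
    D a c + D b d < D a b + D c d := by
  have hab := h.add_eq_of_mem_of_mem hf ha hb
  have hcd := h.add_eq_of_mem_of_mem hf hc hd
  have hAc := (h.2.2.2.2.1 a ha c hc hac).2.2.2
  have hBd := (h.2.2.2.2.2.1 b hb d hd hbd).2.2.2
  linarith

end DisjUnionTwoCliques

theorem stmt15_general (D : X → X → ℝ)
    (A₁ B₁ A₂ B₂ : Set X) (h1 : IsBlockSplit D A₁ B₁) (h2 : IsBlockSplit D A₂ B₂) :
    ∀ a ∈ A₁ ∩ A₂, ∀ b ∈ B₁ ∩ A₂, ∀ c ∈ A₁ ∩ B₂, ∀ d ∈ B₁ ∩ B₂, False := by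
  intro a ha b hb c hc d hd
  obtain ⟨f₁, hP₁, -, h₁⟩ := h1
  obtain ⟨f₂, hP₂, -, h₂⟩ := h2
  have hac : a ≠ c := h₂.2.2.1.ne_of_mem ha.2 hc.2
  have hbd : b ≠ d := h₂.2.2.1.ne_of_mem hb.2 hd.2
  have hab : a ≠ b := h₁.2.2.1.ne_of_mem ha.1 hb.1
  have hcd : c ≠ d := h₁.2.2.1.ne_of_mem hc.1 hd.1
  have lt₁ := h₁.add_lt_add_of_mem hP₁ ha.1 hc.1 hb.1 hd.1 hac hbd
  have lt₂ := h₂.add_lt_add_of_mem hP₂ ha.2 hb.2 hc.2 hd.2 hab hcd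
  linarith

theorem stmt15 [Fintype X] (D : X → X → ℝ) (hD : IsMetric D)
    (hcard : 4 ≤ Fintype.card X)
    (A₁ B₁ A₂ B₂ : Set X) (h1 : IsBlockSplit D A₁ B₁) (h2 : IsBlockSplit D A₂ B₂) :
    ∀ a ∈ A₁ ∩ A₂, ∀ b ∈ B₁ ∩ A₂, ∀ c ∈ A₁ ∩ B₂, ∀ d ∈ B₁ ∩ B₂, False :=
  stmt15_general D A₁ B₁ A₂ B₂ h1 h2
end

section
/- Let D be a metric on a finite set X and S = A|B a block split of X. Then D(f|A) + D(f|B) = α_S for every f ∈ P(D) satisfying f(a) + f(b) = D(a,b) for all a ∈ A and b ∈ B. -/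
open Classical

variable {X : Type*}

/-! With `f a + f b = D a b` on `A × B`, the two sums in the four-point expression defining `α_S`
coincide, both being `(f a + f b) + (f a' + f b')`, and the expression splits as
`(f a + f a' - D a a') + (f b + f b' - D b b')`. So the set whose infimum is `2 α_S` is the
pointwise sum of the sets whose infima are `2 D(f|A)` and `2 D(f|B)`, and infima of finite
nonempty sets of reals add. -/

open Pointwise

section VirtualDistance

variable (D : X → X → ℝ) (f : X → ℝ)

def excessSet (Y : Set X) : Set ℝ :=
  {z | ∃ y ∈ Y, ∃ y' ∈ Y, z = f y + f y' - D y y'}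

theorem vdist_eq_half_sInf_excessSet (Y : Set X) :
    vdist D f Y = 1 / 2 * sInf (excessSet D f Y) := rfl

theorem excessSet_finite [Finite X] (Y : Set X) : (excessSet D f Y).Finite :=
  (Set.finite_range fun p : X × X => f p.1 + f p.2 - D p.1 p.2).subset
    (by rintro z ⟨y, -, y', -, rfl⟩; exact ⟨(y, y'), rfl⟩)

theorem excessSet_nonempty {Y : Set X} (hY : Y.Nonempty) : (excessSet D f Y).Nonempty :=
  let ⟨y, hy⟩ := hY
  ⟨_, y, hy, y, hy, rfl⟩

variable {D f}

theorem fourPointGap_eq_add_of_tight {a a' b b' : X}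
    (hab : f a + f b = D a b) (hab' : f a + f b' = D a b')
    (ha'b : f a' + f b = D a' b) (ha'b' : f a' + f b' = D a' b') :
    max (D a b + D a' b') (D a b' + D a' b) - D a a' - D b b'
      = (f a + f a' - D a a') + (f b + f b' - D b b') := by
  rw [← hab, ← hab', ← ha'b, ← ha'b',
    show f a + f b' + (f a' + f b) = f a + f b + (f a' + f b') by ring, max_self]
  ring

theorem isoIdxSet_eq_excessSet_add {A B : Set X}
    (he : ∀ a ∈ A, ∀ b ∈ B, f a + f b = D a b) :
    {z | ∃ a ∈ A, ∃ a' ∈ A, ∃ b ∈ B, ∃ b' ∈ B,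
        z = max (D a b + D a' b') (D a b' + D a' b) - D a a' - D b b'}
      = excessSet D f A + excessSet D f B := by
  ext z
  simp only [Set.mem_ofPred_eq, Set.mem_add, excessSet]
  constructor
  · rintro ⟨a, ha, a', ha', b, hb, b', hb', rfl⟩
    exact ⟨_, ⟨a, ha, a', ha', rfl⟩, _, ⟨b, hb, b', hb', rfl⟩,
      (fourPointGap_eq_add_of_tight (he a ha b hb) (he a ha b' hb')
        (he a' ha' b hb) (he a' ha' b' hb')).symm⟩
  · rintro ⟨_, ⟨a, ha, a', ha', rfl⟩, _, ⟨b, hb, b', hb', rfl⟩, rfl⟩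
    exact ⟨a, ha, a', ha', b, hb, b', hb',
      (fourPointGap_eq_add_of_tight (he a ha b hb) (he a ha b' hb')
        (he a' ha' b hb) (he a' ha' b' hb')).symm⟩

theorem vdist_add_vdist_eq_isoIdx [Finite X] {A B : Set X} (hA : A.Nonempty) (hB : B.Nonempty)
    (he : ∀ a ∈ A, ∀ b ∈ B, f a + f b = D a b) :
    vdist D f A + vdist D f B = isoIdx D A B := by
  rw [isoIdx, isoIdxSet_eq_excessSet_add he,
    csInf_add (excessSet_nonempty D f hA) (excessSet_finite D f A).bddBelow
      (excessSet_nonempty D f hB) (excessSet_finite D f B).bddBelow,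
    vdist_eq_half_sInf_excessSet, vdist_eq_half_sInf_excessSet, mul_add]

end VirtualDistance

theorem stmt16_general [Fintype X] (D : X → X → ℝ) (A B : Set X)
    (hBS : IsBlockSplit D A B) (f : X → ℝ)
    (he : ∀ a ∈ A, ∀ b ∈ B, f a + f b = D a b) :
    vdist D f A + vdist D f B = isoIdx D A B := by
  obtain ⟨-, -, -, hA, hB, -⟩ := hBS
  exact vdist_add_vdist_eq_isoIdx hA hB he

theorem stmt16 [Fintype X] (D : X → X → ℝ) (hD : IsMetric D) (A B : Set X)
    (hBS : IsBlockSplit D A B) (f : X → ℝ) (hf : memP D f)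
    (he : ∀ a ∈ A, ∀ b ∈ B, f a + f b = D a b) :
    vdist D f A + vdist D f B = isoIdx D A B :=
  stmt16_general D A B hBS f he
end
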